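/- arXiv:2406.14487 — 2 statements merged into one kernel-verified Lean document; each statement's English description precedes it below -/
import Mathlib

section
/- The zero set C₂ := { x ∈ [0,1] : κ₂(x) = 0 } is comeagre (residual) in [0,1] and has full Lebesgue measure, i.e., the Lebesgue measure of C₂ equals 1. -/
/-- `u` is a `p/q`-power: `u = x^n ++ y` with `x` nonempty, `y` a prefix of `x`,
`ℓ(u) = p` and `ℓ(x) = q`. -/
def IsPQPower {α : Type*} (u : List α) (p q : ℕ) : Prop :=
  0 < p ∧ 0 < q ∧ u.length = p ∧
    ∃ (x y : List α) (n : ℕ), x ≠ [] ∧ 0 < n ∧ y <+: x ∧ x.length = q ∧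
      u = (List.replicate n x).flatten ++ y

/-- `u` is an `s`-power for the rational `s`. -/
def IsPowerOfExp {α : Type*} (u : List α) (s : ℚ) : Prop :=
  ∃ p q : ℕ, IsPQPower u p q ∧ s = (p : ℚ) / q

/-- the finite word `u` occurs as a (contiguous) subword of the infinite word `w`. -/
def InfOccurs {α : Type*} (u : List α) (w : ℕ → α) : Prop :=
  ∃ i : ℕ, u = (List.range u.length).map fun k => w (i + k)

/-- the finite word `w` contains an `r`-power. -/
def ContainsPowFin {α : Type*} (w : List α) (r : ℚ) : Prop :=
  ∃ u : List α, u <:+: w ∧ ∃ s : ℚ, r ≤ s ∧ IsPowerOfExp u s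

/-- the infinite word `w` contains an `r`-power. -/
def ContainsPowInf {α : Type*} (w : ℕ → α) (r : ℚ) : Prop :=
  ∃ u : List α, InfOccurs u w ∧ ∃ s : ℚ, r ≤ s ∧ IsPowerOfExp u s

open Classical in
/-- critical exponent of a finite word. -/
noncomputable def Efin {α : Type*} (w : List α) : EReal :=
  if w = [] then 0
  else sSup {x : EReal | ∃ r : ℚ, ContainsPowFin w r ∧ x = ((r : ℝ) : EReal)}

/-- critical exponent of an infinite word. -/
noncomputable def Einf {α : Type*} (w : ℕ → α) : EReal :=
  sSup {x : EReal | ∃ r : ℚ, ContainsPowInf w r ∧ x = ((r : ℝ) : EReal)}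

/-- concatenation of a finite and an infinite word. -/
def wordCat {α : Type*} (w : List α) (y : ℕ → α) : ℕ → α :=
  fun n => if h : n < w.length then w[n] else y (n - w.length)

/-- the `k`-th digit of the base-`b` expansion of `x`, choosing for `b`-adic
rationals the expansion whose digits are ultimately `b - 1`. -/
noncomputable def baseDigit (b : ℕ) (x : ℝ) (k : ℕ) : ℕ :=
  if x ≤ 0 then 0
  else (⌈x * b ^ (k + 1)⌉ - b * ⌈x * b ^ k⌉ + ((b : ℤ) - 1)).toNat

/-- the base-`b` critical exponent function `κ_b`, with the convention `1/∞ = 0`. -/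
noncomputable def kappaBase (b : ℕ) (x : ℝ) : ℝ :=
  1 / (Einf (baseDigit b x)).toReal

/-- the `2`-critical exponent function `κ₂`. -/
noncomputable def kappa2 : ℝ → ℝ := kappaBase 2

/-- The Thue–Morse sequence. -/
def tm : ℕ → Fin 2
  | 0 => 0
  | (n + 1) => if (n + 1) % 2 = 0 then tm ((n + 1) / 2) else 1 - tm ((n + 1) / 2)
decreasing_by all_goals omega

/-- the real number whose binary expansion is the Thue–Morse sequence. -/
noncomputable def xtau : ℝ := ∑' i : ℕ, ((tm i : ℕ) : ℝ) / 2 ^ (i + 1)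

/-
A run of `n` zeros in the binary expansion is an `n`-power, so `κ₂ x = 0` as soon as the
expansion of `x` has arbitrarily long runs of zeros.

Category: the digits `i, …, i + n - 1` of every point of `(m / 2^i, m / 2^i + 2^-(i+n))` vanish,
and the union of these intervals over all dyadic `m / 2^i` is open and dense; intersecting over
`n` gives a dense `Gδ` on which `κ₂` vanishes.

Measure: let `B` be the set of `x ∈ [0,1]` with no run of `n` zeros. Its first block of `n`
digits is a number `t ∈ [1, 2^n)`, and stripping it, `x ↦ 2^n x - t`, maps `B` into itself. So
`B` is covered by `2^n - 1` preimages of `B`, each of measure `|B| / 2^n`, whence `|B| = 0`.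
-/

open MeasureTheory Set

section CriticalExponent

variable {α : Type*}

lemma containsPowInf_of_run {w : ℕ → α} {a : α} {n i : ℕ} (hn : 0 < n)
    (h : ∀ j < n, w (i + j) = a) : ContainsPowInf w n := by
  refine ⟨List.replicate n a, ⟨i, ?_⟩, n, le_rfl, n, 1,
    ⟨hn, one_pos, by simp, [a], [], n, by simp, hn, List.nil_prefix, rfl, by simp⟩, by simp⟩
  refine (List.eq_replicate_iff.mpr ⟨by simp, ?_⟩).symm
  simp only [List.length_replicate, List.mem_map, List.mem_range]
  rintro _ ⟨j, hj, rfl⟩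
  exact h j hj

lemma einf_eq_top_of_forall_containsPowInf {w : ℕ → α}
    (h : ∀ n : ℕ, 0 < n → ContainsPowInf w n) : Einf w = ⊤ := by
  refine sSup_eq_top.mpr fun b hb => ?_
  obtain ⟨n, hbn⟩ : ∃ n : ℕ, b < (n + 1 : ℕ) := by
    induction b using EReal.rec with
    | bot => exact ⟨0, EReal.bot_lt_coe _⟩
    | coe r =>
      obtain ⟨n, hn⟩ := exists_nat_gt r
      exact ⟨n, EReal.coe_lt_coe_iff.mpr (hn.trans (by simp))⟩
    | top => exact absurd hb (lt_irrefl _)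
  exact ⟨((n + 1 : ℕ) : ℝ), ⟨(n + 1 : ℕ), h _ n.succ_pos, by simp⟩, hbn⟩

end CriticalExponent

lemma kappaBase_eq_zero_of_einf_eq_top {b : ℕ} {x : ℝ} (h : Einf (baseDigit b x) = ⊤) :
    kappaBase b x = 0 := by
  simp [kappaBase, h]

def HasZeroRun (x : ℝ) (n : ℕ) : Prop :=
  ∃ i, ∀ j < n, baseDigit 2 x (i + j) = 0

lemma kappa2_eq_zero_of_forall_hasZeroRun {x : ℝ} (h : ∀ n, HasZeroRun x n) : kappa2 x = 0 :=
  kappaBase_eq_zero_of_einf_eq_top <| einf_eq_top_of_forall_containsPowInf fun n hn =>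
    let ⟨_, hi⟩ := h n; containsPowInf_of_run hn hi

lemma baseDigit_of_nonpos {b : ℕ} {x : ℝ} (hx : x ≤ 0) (k : ℕ) : baseDigit b x k = 0 := by
  simp [baseDigit, hx]

lemma baseDigit_two_of_pos {x : ℝ} (hx : 0 < x) (k : ℕ) :
    baseDigit 2 x k = (⌈x * 2 ^ (k + 1)⌉ - 2 * ⌈x * 2 ^ k⌉ + 1).toNat := by
  simp only [baseDigit, if_neg hx.not_ge]
  norm_num

lemma baseDigit_two_mul_pow_sub {x : ℝ} {n : ℕ} {m : ℤ} (hx : 0 < x)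
    (hy : 0 < x * 2 ^ n - m) (k : ℕ) :
    baseDigit 2 (x * 2 ^ n - m) k = baseDigit 2 x (n + k) := by
  have hceil : ∀ j, ⌈(x * 2 ^ n - m) * 2 ^ j⌉ = ⌈x * 2 ^ (n + j)⌉ - m * 2 ^ j := fun j => by
    rw [sub_mul, pow_add, ← mul_assoc, ← Int.ceil_sub_intCast]
    push_cast; rfl
  rw [baseDigit_two_of_pos hx, baseDigit_two_of_pos hy, hceil, hceil, ← add_assoc]
  congr 1
  ring

lemma baseDigit_two_eq_zero_of_le {y : ℝ} {n j : ℕ} (hy : y ≤ 1 / 2 ^ n) (hj : j < n) :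
    baseDigit 2 y j = 0 := by
  rcases le_or_gt y 0 with hy0 | hy0
  · exact baseDigit_of_nonpos hy0 j
  have hceil : ∀ k ≤ n, ⌈y * 2 ^ k⌉ = 1 := fun k hk => by
    rw [Int.ceil_eq_iff]
    refine ⟨by norm_num; positivity, ?_⟩
    calc y * 2 ^ k ≤ 1 / 2 ^ n * 2 ^ n := by gcongr; norm_num
      _ = _ := by simp
  rw [baseDigit_two_of_pos hy0, hceil j hj.le, hceil (j + 1) hj]
  rfl

lemma hasZeroRun_of_mem_Ioc {x : ℝ} {n i : ℕ} {m : ℤ}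
    (hx : x ∈ Ioc ((m : ℝ) / 2 ^ i) (m / 2 ^ i + 1 / 2 ^ (i + n))) : HasZeroRun x n := by
  refine ⟨i, fun j hj => ?_⟩
  rcases le_or_gt x 0 with hx0 | hx0
  · exact baseDigit_of_nonpos hx0 _
  have h2i : (0 : ℝ) < 2 ^ i := by positivity
  have hy : 0 < x * 2 ^ i - m := by
    have := (div_lt_iff₀ h2i).mp hx.1
    linarith
  rw [← baseDigit_two_mul_pow_sub hx0 hy]
  refine baseDigit_two_eq_zero_of_le ?_ hj
  have hscale : 1 / 2 ^ (i + n) * 2 ^ i = (1 : ℝ) / 2 ^ n := by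
    rw [pow_add]; field_simp
  have := (mul_le_mul_iff_of_pos_right h2i).mpr hx.2
  rw [add_mul, div_mul_cancel₀ _ h2i.ne', hscale] at this
  linarith

def zeroRunOpen (n : ℕ) : Set ℝ :=
  ⋃ (i : ℕ) (m : ℤ), Ioo ((m : ℝ) / 2 ^ i) (m / 2 ^ i + 1 / 2 ^ (i + n))

lemma isOpen_zeroRunOpen (n : ℕ) : IsOpen (zeroRunOpen n) :=
  isOpen_iUnion fun _ => isOpen_iUnion fun _ => isOpen_Ioo

lemma hasZeroRun_of_mem_zeroRunOpen {x : ℝ} {n : ℕ} (hx : x ∈ zeroRunOpen n) :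
    HasZeroRun x n := by
  simp only [zeroRunOpen, mem_iUnion] at hx
  obtain ⟨i, m, hx⟩ := hx
  exact hasZeroRun_of_mem_Ioc (Ioo_subset_Ioc_self hx)

lemma exists_mem_zeroRunOpen_Ioo (n : ℕ) {a b : ℝ} (hab : a < b) :
    ∃ c ∈ zeroRunOpen n, c ∈ Ioo a b := by
  obtain ⟨i, hi⟩ := exists_pow_lt_of_lt_one (half_pos (sub_pos.mpr hab)) one_half_lt_one
  rw [one_div_pow] at hi
  have h2i : (0 : ℝ) < 2 ^ i := by positivity
  set m : ℤ := ⌊a * 2 ^ i⌋ + 1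
  have ham : a < m / 2 ^ i := by
    rw [lt_div_iff₀ h2i]; push_cast [m]; exact Int.lt_floor_add_one _
  have hma : (m : ℝ) / 2 ^ i ≤ a + 1 / 2 ^ i := by
    rw [div_le_iff₀ h2i, add_mul, one_div_mul_cancel h2i.ne']
    push_cast [m]; linarith [Int.floor_le (a * 2 ^ i)]
  have hεpos : (0 : ℝ) < 1 / 2 ^ (i + n + 1) := by positivity
  have hε_run : (1 : ℝ) / 2 ^ (i + n + 1) < 1 / 2 ^ (i + n) :=
    one_div_lt_one_div_of_lt (by positivity) (pow_lt_pow_right₀ one_lt_two (by omega))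
  have hε_step : (1 : ℝ) / 2 ^ (i + n + 1) ≤ 1 / 2 ^ i :=
    one_div_le_one_div_of_le h2i (pow_le_pow_right₀ one_le_two (by omega))
  refine ⟨m / 2 ^ i + 1 / 2 ^ (i + n + 1), ?_, by linarith, by linarith⟩
  simp only [zeroRunOpen, mem_iUnion]
  exact ⟨i, m, by linarith, by linarith⟩

lemma dense_preimage_zeroRunOpen {s : Set ℝ} [s.OrdConnected] [Nontrivial s] (n : ℕ) :
    Dense ((↑) ⁻¹' zeroRunOpen n : Set s) :=
  dense_of_exists_between fun a b hab =>
    let ⟨c, hc, hac, hcb⟩ := exists_mem_zeroRunOpen_Ioo n hab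
    ⟨⟨c, Set.OrdConnected.out ‹_› a.2 b.2 ⟨hac.le, hcb.le⟩⟩, hc, hac, hcb⟩

lemma volume_preimage_mul_sub {a : ℝ} (ha : a ≠ 0) (t : ℝ) (s : Set ℝ) :
    volume ((fun x => x * a - t) ⁻¹' s) = ENNReal.ofReal |a⁻¹| * volume s := by
  change volume ((· * a) ⁻¹' ((· + -t) ⁻¹' s)) = _
  rw [Real.volume_preimage_mul_right ha, measure_preimage_add_right]

def noZeroRun (n : ℕ) : Set ℝ := {x ∈ Icc 0 1 | ¬ HasZeroRun x n}

lemma noZeroRun_subset_biUnion_preimage (n : ℕ) :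
    noZeroRun n ⊆
      ⋃ t ∈ (Finset.Ico 1 (2 ^ n) : Finset ℕ), (fun x => x * 2 ^ n - t) ⁻¹' noZeroRun n := by
  rintro x ⟨⟨-, hx1⟩, hrun⟩
  have hx0 : 0 < x := by
    by_contra! hx0
    exact hrun ⟨0, fun j _ => baseDigit_of_nonpos hx0 _⟩
  have h2n : (0 : ℝ) < 2 ^ n := by positivity
  -- `t` is the number whose binary digits are the first `n` digits of `x`
  obtain ⟨t, ht⟩ := Nat.exists_eq_add_one_of_ne_zero (Nat.ceil_pos.mpr (mul_pos hx0 h2n)).ne'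
  have ht_gt : (t : ℝ) < x * 2 ^ n := by
    have := Nat.ceil_lt_add_one (mul_pos hx0 h2n).le
    rw [ht] at this; push_cast at this; linarith
  have ht_ge : x * 2 ^ n ≤ t + 1 := by
    have := Nat.le_ceil (x * 2 ^ n)
    rw [ht] at this; push_cast at this; exact this
  have ht_pos : 1 ≤ t := by
    by_contra! ht0
    refine hrun (hasZeroRun_of_mem_Ioc (i := 0) (m := 0) ⟨by simpa using hx0, ?_⟩)
    obtain rfl : t = 0 := by omega
    simp only [Int.cast_zero, zero_div, zero_add, pow_zero]
    rw [le_div_iff₀ h2n]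
    simpa using ht_ge
  have ht_lt : t < 2 ^ n := by
    have : ⌈x * 2 ^ n⌉₊ ≤ 2 ^ n := Nat.ceil_le.mpr (by push_cast; nlinarith)
    omega
  have hshift (k : ℕ) : baseDigit 2 (x * 2 ^ n - t) k = baseDigit 2 x (n + k) := by
    simpa using baseDigit_two_mul_pow_sub (m := t) hx0 (by push_cast; linarith) k
  refine mem_iUnion₂.mpr ⟨t, Finset.mem_Ico.mpr ⟨ht_pos, ht_lt⟩, ⟨by linarith, by linarith⟩, ?_⟩
  rintro ⟨i, hi⟩
  exact hrun ⟨n + i, fun j hj => by rw [add_assoc, ← hshift]; exact hi j hj⟩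

lemma volume_noZeroRun (n : ℕ) : volume (noZeroRun n) = 0 := by
  have hfin : volume (noZeroRun n) ≠ ⊤ :=
    ((measure_mono (sep_subset _ _)).trans_lt (by simp : volume (Icc (0 : ℝ) 1) < ⊤)).ne
  have h2n : (2 : ℝ) ^ n ≠ 0 := by positivity
  set c : ℕ := 2 ^ n - 1
  have hc : (c : ENNReal) + 1 = 2 ^ n := by
    norm_cast; exact Nat.sub_add_cancel Nat.one_le_two_pow
  have hscaled : volume (noZeroRun n) ≤ c * ((2 ^ n)⁻¹ * volume (noZeroRun n)) := by
    calc volume (noZeroRun n) ≤ ∑ t ∈ (Finset.Ico 1 (2 ^ n) : Finset ℕ),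
          volume ((fun x : ℝ => x * 2 ^ n - t) ⁻¹' noZeroRun n) :=
        (measure_mono (noZeroRun_subset_biUnion_preimage n)).trans (measure_biUnion_finset_le _ _)
      _ = c * ((2 ^ n)⁻¹ * volume (noZeroRun n)) := by
        simp only [volume_preimage_mul_sub h2n]
        simp [c]
  have hcontract : c * volume (noZeroRun n) + volume (noZeroRun n) ≤
      c * volume (noZeroRun n) + 0 := by
    calc c * volume (noZeroRun n) + volume (noZeroRun n)
        = 2 ^ n * volume (noZeroRun n) := by rw [← hc, add_mul, one_mul]
      _ ≤ 2 ^ n * (c * ((2 ^ n)⁻¹ * volume (noZeroRun n))) := by gcongr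
      _ = c * volume (noZeroRun n) + 0 := by
        rw [mul_left_comm, ← mul_assoc (2 ^ n), ENNReal.mul_inv_cancel (by simp) (by simp),
          one_mul, add_zero]
  exact nonpos_iff_eq_zero.mp
    (ENNReal.le_of_add_le_add_left (ENNReal.mul_ne_top (by simp) hfin) hcontract)

theorem stmt_6 :
    {x : Set.Icc (0 : ℝ) 1 | kappa2 ↑x = 0} ∈ residual (Set.Icc (0 : ℝ) 1) ∧
    MeasureTheory.volume {x : ℝ | x ∈ Set.Icc (0 : ℝ) 1 ∧ kappa2 x = 0} = 1 := by
  constructor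
  · have hGδ : (⋂ n, (↑) ⁻¹' zeroRunOpen n : Set (Icc (0 : ℝ) 1)) ∈ residual _ :=
      countable_iInter_mem.mpr fun n => residual_of_dense_open
        ((isOpen_zeroRunOpen n).preimage continuous_subtype_val) (dense_preimage_zeroRunOpen n)
    refine Filter.mem_of_superset hGδ fun x hx => ?_
    exact kappa2_eq_zero_of_forall_hasZeroRun fun n =>
      hasZeroRun_of_mem_zeroRunOpen (mem_iInter.mp hx n)
  · have hnull : volume (⋃ n, noZeroRun n) = 0 := measure_iUnion_null volume_noZeroRun
    refine le_antisymm ((measure_mono fun x hx => hx.1).trans (by simp)) ?_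
    calc (1 : ENNReal) = volume (Icc (0 : ℝ) 1 \ ⋃ n, noZeroRun n) := by
          rw [measure_sdiff_null hnull]; simp
      _ ≤ _ := by
        refine measure_mono fun x ⟨hx, hbad⟩ =>
          ⟨hx, kappa2_eq_zero_of_forall_hasZeroRun fun n => ?_⟩
        by_contra hn
        exact hbad (mem_iUnion.mpr ⟨n, hx, hn⟩)
end

section
/- Both the zero set C₂ := { x ∈ [0,1] : κ₂(x) = 0 } and its complement D₂ := [0,1] \ C₂ are dense in [0,1], and C₂ is neither an open nor a closed subset of [0,1] (equivalently, the same holds for D₂). -/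
/-!
Every dyadic rational in `(0, 1]` is `(m + 1) / 2ⁿ`, whose expansion ends in `1^ω`; its critical
exponent is `∞`, so `κ₂` vanishes on a dense set. The numbers `(m + x) / 2ⁿ`, with `x` the
Thue–Morse number, are dense as well; their expansion is a word of length `n` followed by the
Thue–Morse word, which is overlap-free, so their critical exponent lies in `[1, n + 2]` and
`κ₂ ≠ 0` there. A dense set with dense complement is neither open nor closed.
-/

def IsOverlapAt {α : Type*} (w : ℕ → α) (i q : ℕ) : Prop :=
  0 < q ∧ ∀ j ≤ q, w (i + j) = w (i + j + q)

lemma IsOverlapAt.of_comp_add {α β : Type*} {f : α → β} (hf : Function.Injective f)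
    {v : ℕ → α} {w : ℕ → β} {L i q : ℕ} (hw : ∀ k, w (k + L) = f (v k))
    (h : IsOverlapAt w (i + L) q) : IsOverlapAt v i q := by
  refine ⟨h.1, fun j hj => hf ?_⟩
  have := h.2 j hj
  rwa [show i + L + j + q = i + j + q + L by omega, show i + L + j = i + j + L by omega, hw,
    hw] at this

lemma tm_two_mul (m : ℕ) : tm (2 * m) = tm m := by
  cases m with
  | zero => rfl
  | succ m =>
    rw [show 2 * (m + 1) = (2 * m + 1) + 1 by omega, tm]
    simp [show (2 * m + 1 + 1) % 2 = 0 by omega, show (2 * m + 1 + 1) / 2 = m + 1 by omega]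

lemma tm_two_mul_add_one (m : ℕ) : tm (2 * m + 1) = tm m + 1 := by
  rw [tm]
  simp only [show (2 * m + 1) % 2 = 1 by omega, show (2 * m + 1) / 2 = m by omega]
  generalize tm m = a
  revert a
  decide

lemma tm_two_mul_ne (m : ℕ) : tm (2 * m) ≠ tm (2 * m + 1) := by
  rw [tm_two_mul, tm_two_mul_add_one]
  generalize tm m = a
  revert a
  decide

lemma not_tm_eq_and_tm_eq (n : ℕ) :
    ¬ (tm n = tm (n + 1) ∧ tm (n + 1) = tm (n + 2)) := by
  rintro ⟨h₁, h₂⟩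
  rcases Nat.even_or_odd' n with ⟨m, rfl | rfl⟩
  · exact tm_two_mul_ne m h₁
  · exact tm_two_mul_ne (m + 1) (by rwa [show 2 * (m + 1) = 2 * m + 1 + 1 by omega])

lemma IsOverlapAt.tm_half {i r : ℕ} (h : IsOverlapAt tm i (2 * r)) :
    IsOverlapAt tm (i / 2) r := by
  obtain ⟨hr, h⟩ := h
  refine ⟨by omega, fun j hj => ?_⟩
  have := h (2 * j) (by omega)
  rcases Nat.even_or_odd' i with ⟨a, rfl | rfl⟩
  · rw [show 2 * a / 2 = a by omega]
    rwa [show 2 * a + 2 * j = 2 * (a + j) by ring,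
      show 2 * (a + j) + 2 * r = 2 * (a + j + r) by ring, tm_two_mul, tm_two_mul] at this
  · rw [show (2 * a + 1) / 2 = a by omega]
    rwa [show 2 * a + 1 + 2 * j = 2 * (a + j) + 1 by ring,
      show 2 * (a + j) + 1 + 2 * r = 2 * (a + j + r) + 1 by ring,
      tm_two_mul_add_one, tm_two_mul_add_one, add_left_inj] at this

/-- An odd shift matches each aligned block `tm (2m), tm (2m + 1) = t, t + 1` against a
misaligned one, which forces two equal neighbours; two adjacent blocks give three in a row. -/
lemma not_isOverlapAt_tm_odd (i r : ℕ) : ¬ IsOverlapAt tm i (2 * r + 1) := by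
  rintro ⟨-, h⟩
  rcases Nat.eq_zero_or_pos r with rfl | hr
  · exact not_tm_eq_and_tm_eq i ⟨h 0 (by omega), by simpa [add_assoc] using h 1 le_rfl⟩
  rcases Nat.even_or_odd' i with ⟨a, rfl | rfl⟩
  · have key : ∀ m, a ≤ m → m ≤ a + r → tm (m + r) = tm (m + r + 1) := by
      intro m h₁ h₂
      have hA := h (2 * m - 2 * a) (by omega)
      have hB := h (2 * m + 1 - 2 * a) (by omega)
      rw [show 2 * a + (2 * m - 2 * a) = 2 * m by omega,
        show 2 * m + (2 * r + 1) = 2 * (m + r) + 1 by omega, tm_two_mul,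
        tm_two_mul_add_one] at hA
      rw [show 2 * a + (2 * m + 1 - 2 * a) = 2 * m + 1 by omega,
        show 2 * m + 1 + (2 * r + 1) = 2 * (m + r + 1) by omega, tm_two_mul,
        tm_two_mul_add_one] at hB
      rw [← hB, hA, add_assoc, show (1 : Fin 2) + 1 = 0 from rfl, add_zero]
    exact not_tm_eq_and_tm_eq (a + r)
      ⟨key a le_rfl (by omega),
        by simpa [add_right_comm] using key (a + 1) (by omega) (by omega)⟩
  · have key : ∀ m, a ≤ m → m ≤ a + r → tm m = tm (m + 1) := by
      intro m h₁ h₂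
      have hA := h (2 * m - 2 * a) (by omega)
      have hB := h (2 * m + 1 - 2 * a) (by omega)
      rw [show 2 * a + 1 + (2 * m - 2 * a) = 2 * m + 1 by omega,
        show 2 * m + 1 + (2 * r + 1) = 2 * (m + r + 1) by omega, tm_two_mul,
        tm_two_mul_add_one] at hA
      rw [show 2 * a + 1 + (2 * m + 1 - 2 * a) = 2 * (m + 1) by omega,
        show 2 * (m + 1) + (2 * r + 1) = 2 * (m + r + 1) + 1 by omega, tm_two_mul,
        tm_two_mul_add_one] at hB
      rw [hB, ← hA, add_assoc, show (1 : Fin 2) + 1 = 0 from rfl, add_zero]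
    exact not_tm_eq_and_tm_eq a ⟨key a le_rfl (by omega), key (a + 1) (by omega) (by omega)⟩

theorem not_isOverlapAt_tm (i q : ℕ) : ¬ IsOverlapAt tm i q := by
  induction q using Nat.strong_induction_on generalizing i with
  | _ q ih =>
    intro h
    rcases Nat.even_or_odd' q with ⟨r, rfl | rfl⟩
    · exact ih r (by have := h.1; omega) (i / 2) (IsOverlapAt.tm_half h)
    · exact not_isOverlapAt_tm_odd i r h

section CriticalExponent

variable {α : Type*}

lemma IsPQPower.hasPeriod {u : List α} {p q : ℕ} (h : IsPQPower u p q) : u.HasPeriod q := by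
  obtain ⟨-, -, -, x, y, n, -, hn, hyx, rfl, rfl⟩ := h
  obtain ⟨n, rfl⟩ : ∃ m, n = m + 1 := ⟨n - 1, by omega⟩
  have hx : (List.replicate (n + 1) x).flatten = x ++ (List.replicate n x).flatten := by
    rw [List.replicate_succ, List.flatten_cons]
  have htake : ((List.replicate (n + 1) x).flatten ++ y).take x.length = x := by
    simp [hx, List.append_assoc]
  have hcomm : x ++ (List.replicate n x).flatten = (List.replicate n x).flatten ++ x := by
    rw [← hx, List.replicate_succ', List.flatten_append, List.flatten_singleton]
  rw [List.HasPeriod, htake, hx, List.append_assoc, List.prefix_append_right_inj,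
    ← List.append_assoc, hcomm, List.append_assoc, List.prefix_append_right_inj]
  exact hyx.trans (List.prefix_append _ _)

lemma isPQPower_replicate (c : α) {N : ℕ} (hN : 0 < N) :
    IsPQPower (List.replicate N c) N 1 :=
  ⟨hN, one_pos, List.length_replicate, [c], [], N, List.cons_ne_nil _ _, hN, List.nil_prefix,
    rfl, by simp⟩

lemma le_Einf_of_isPQPower {w : ℕ → α} {u : List α} {p q : ℕ} (ho : InfOccurs u w)
    (hu : IsPQPower u p q) : ((((p : ℚ) / q : ℚ) : ℝ) : EReal) ≤ Einf w :=
  le_sSup ⟨_, ⟨u, ho, _, le_rfl, p, q, hu, rfl⟩, rfl⟩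

lemma one_le_Einf (w : ℕ → α) : 1 ≤ Einf w := by
  simpa using le_Einf_of_isPQPower (w := w) ⟨0, by simp⟩ (isPQPower_replicate (w 0) one_pos)

lemma Einf_eq_top_of_forall_add_eq {w : ℕ → α} {c : α} {L : ℕ} (hw : ∀ k, w (k + L) = c) :
    Einf w = ⊤ := by
  refine (EReal.eq_top_iff_forall_lt _).mpr fun y => ?_
  obtain ⟨N, hN⟩ := exists_nat_gt (max y 0)
  have hN₀ : 0 < N := by exact_mod_cast (le_max_right y 0).trans_lt hN
  have ho : InfOccurs (List.replicate N c) w :=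
    ⟨L, List.ext_getElem (by simp) fun k _ _ => by simp [add_comm L, hw]⟩
  refine lt_of_lt_of_le ?_ (le_Einf_of_isPQPower ho (isPQPower_replicate c hN₀))
  simpa using EReal.coe_lt_coe_iff.mpr ((le_max_left y 0).trans_lt hN)

lemma IsPQPower.eq_of_infOccurs {u : List α} {w : ℕ → α} {p q i : ℕ} (hu : IsPQPower u p q)
    (ho : u = (List.range u.length).map fun k => w (i + k)) {j : ℕ} (hj : j + q < p) :
    w (i + j) = w (i + j + q) := by
  have hlen : u.length = p := hu.2.2.1
  have := (List.hasPeriod_iff_getElem?.mp hu.hasPeriod) j (by omega)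
  rw [ho] at this
  simpa [List.getElem?_map, List.getElem?_range, hlen, show j < p by omega, hj, add_assoc]
    using this

/-- A `p/q`-power of length `p > 2q + L` would contain an overlap of period `q` starting
beyond position `L`. -/
lemma IsPQPower.le_of_forall_not_isOverlapAt {w : ℕ → α} {L : ℕ}
    (hw : ∀ i q, ¬ IsOverlapAt w (i + L) q) {u : List α} {p q : ℕ} (ho : InfOccurs u w)
    (hu : IsPQPower u p q) : p ≤ 2 * q + L := by
  obtain ⟨i, ho⟩ := ho
  by_contra! hp
  refine hw (max i L - L) q ⟨hu.2.1, fun j hj => ?_⟩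
  have := hu.eq_of_infOccurs ho (j := max i L - i + j) (by omega)
  rwa [show i + (max i L - i + j) = max i L - L + L + j by omega] at this

lemma Einf_le_of_forall_not_isOverlapAt {w : ℕ → α} {L : ℕ}
    (hw : ∀ i q, ¬ IsOverlapAt w (i + L) q) : Einf w ≤ ((2 + L : ℕ) : ℝ) := by
  refine sSup_le ?_
  rintro _ ⟨r, ⟨u, ho, s, hrs, p, q, hu, rfl⟩, rfl⟩
  have hq : (0 : ℚ) < q := by exact_mod_cast hu.2.1
  have hp : (p : ℚ) ≤ 2 * q + L := by exact_mod_cast hu.le_of_forall_not_isOverlapAt hw ho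
  have hL : (L : ℚ) ≤ L * q :=
    le_mul_of_one_le_right (by positivity) (by exact_mod_cast hu.2.1)
  have : r ≤ ((2 + L : ℕ) : ℚ) := hrs.trans <| (div_le_iff₀ hq).mpr (by push_cast; nlinarith)
  exact_mod_cast this

end CriticalExponent

section Digits

open Real (ofDigits ofDigitsTerm)

variable {b : ℕ}

lemma Real.ofDigits_pos {a : ℕ → Fin b} (ha : ∃ i, (a i : ℕ) ≠ 0) : 0 < ofDigits a := by
  obtain ⟨i, hi⟩ := ha
  have hb : 0 < b := Fin.pos (a 0)
  have hai : (0 : ℝ) < a i := by exact_mod_cast Nat.pos_of_ne_zero hi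
  exact Real.summable_ofDigitsTerm.tsum_pos (fun _ => Real.ofDigitsTerm_nonneg) i
    (by simp only [ofDigitsTerm]; positivity)

lemma Real.ceil_ofDigits {a : ℕ → Fin b} (ha : ∃ i, (a i : ℕ) ≠ 0) : ⌈ofDigits a⌉ = 1 :=
  Int.ceil_eq_iff.mpr
    ⟨by simpa using Real.ofDigits_pos ha, by simpa using Real.ofDigits_le_one a⟩

lemma Real.ofDigits_shift_mul_base (a : ℕ → Fin b) (k : ℕ) :
    ofDigits (fun i => a (i + k)) * b = a k + ofDigits (fun i => a (i + (k + 1))) := by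
  have hb : (b : ℝ) ≠ 0 := by have := Fin.pos (a 0); positivity
  rw [Real.ofDigits_eq_sum_add_ofDigits _ 1]
  simp only [Finset.range_one, Finset.sum_singleton, ofDigitsTerm, zero_add,
    Nat.add_right_comm _ 1 k, ← Nat.add_assoc]
  field_simp

lemma Real.exists_ofDigits_mul_pow_eq (a : ℕ → Fin b) (k : ℕ) :
    ∃ N : ℤ, ofDigits a * b ^ k = N + ofDigits (fun i => a (i + k)) := by
  induction k with
  | zero => exact ⟨0, by simp⟩
  | succ k ih =>
    obtain ⟨N, hN⟩ := ih
    refine ⟨b * N + a k, ?_⟩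
    rw [pow_succ, ← mul_assoc, hN, add_mul, Real.ofDigits_shift_mul_base]
    push_cast
    ring

theorem baseDigit_ofDigits (a : ℕ → Fin b) (ha : ∀ n, ∃ i, (a (i + n) : ℕ) ≠ 0) (k : ℕ) :
    baseDigit b (ofDigits a) k = a k := by
  obtain ⟨N, hN⟩ := Real.exists_ofDigits_mul_pow_eq a k
  have hN' :
      ofDigits a * b ^ (k + 1) = (b * N + a k : ℤ) + ofDigits (fun i => a (i + (k + 1))) := by
    rw [pow_succ, ← mul_assoc, hN, add_mul, Real.ofDigits_shift_mul_base]
    push_cast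
    ring
  have hpos : 0 < ofDigits a := Real.ofDigits_pos (by simpa using ha 0)
  rw [baseDigit, if_neg hpos.not_ge, hN, hN', Int.ceil_intCast_add,
    Int.ceil_intCast_add, Real.ceil_ofDigits (ha _), Real.ceil_ofDigits (ha _)]
  ring_nf
  exact Int.toNat_natCast _

lemma baseDigit_add_div_pow (hb : 0 < b) {y : ℝ} (hy : 0 < y) (m n k : ℕ) :
    baseDigit b ((m + y) / b ^ n) (k + n) = baseDigit b y k := by
  have key : ∀ j, (m + y) / b ^ n * b ^ (j + n) = y * b ^ j + ((m * b ^ j : ℕ) : ℤ) := by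
    intro j
    have : (b : ℝ) ^ n ≠ 0 := by positivity
    push_cast
    rw [pow_add]
    field_simp
    ring
  rw [baseDigit, baseDigit, if_neg (not_le.mpr (by positivity)), if_neg hy.not_ge,
    show k + n + 1 = k + 1 + n by omega, key, key, Int.ceil_add_intCast, Int.ceil_add_intCast]
  congr 1
  push_cast
  ring

lemma kappaBase_nat_add_one_div_pow (hb : 1 < b) (m n : ℕ) :
    kappaBase b ((m + 1) / b ^ n) = 0 := by
  have hdigit : ∀ k, baseDigit b ((m + 1) / b ^ n) (k + n) = b - 1 := fun k => by
    rw [baseDigit_add_div_pow (by omega) one_pos, ← Real.ofDigits_const_last_eq_one' hb,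
      baseDigit_ofDigits _ fun _ => ⟨0, show b - 1 ≠ 0 by omega⟩]
  simp [kappaBase, Einf_eq_top_of_forall_add_eq hdigit]

lemma kappaBase_nat_add_ofDigits_div_pow_ne_zero (a : ℕ → Fin b)
    (ha : ∀ n, ∃ i, (a (i + n) : ℕ) ≠ 0) (hov : ∀ i q, ¬ IsOverlapAt a i q) (m n : ℕ) :
    kappaBase b ((m + ofDigits a) / b ^ n) ≠ 0 := by
  have hdigit : ∀ k, baseDigit b ((m + ofDigits a) / b ^ n) (k + n) = a k := fun k => by
    rw [baseDigit_add_div_pow (Fin.pos (a 0)) (Real.ofDigits_pos (by simpa using ha 0)),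
      baseDigit_ofDigits a ha]
  set E := Einf (baseDigit b ((m + ofDigits a) / b ^ n))
  have hup : E ≤ ((2 + n : ℕ) : ℝ) := Einf_le_of_forall_not_isOverlapAt fun i q h =>
    hov i q (h.of_comp_add Fin.val_injective hdigit)
  have hE : 1 ≤ E.toReal := by
    simpa using EReal.toReal_le_toReal (one_le_Einf _) (by decide)
      (hup.trans_lt (EReal.coe_lt_top _)).ne
  rw [kappaBase]
  positivity

end Digits

lemma exists_tm_add_ne_zero (n : ℕ) : ∃ i, (tm (i + n) : ℕ) ≠ 0 := by
  rcases (by decide : ∀ x y : Fin 2, x ≠ y → (x : ℕ) ≠ 0 ∨ (y : ℕ) ≠ 0) _ _ (tm_two_mul_ne n)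
    with h | h
  · exact ⟨n, by rwa [← two_mul]⟩
  · exact ⟨n + 1, by rwa [show n + 1 + n = 2 * n + 1 by omega]⟩

lemma exists_nat_le_le_add_one {t : ℝ} {N : ℕ} (ht : 0 ≤ t) (htN : t ≤ N) (hN : 0 < N) :
    ∃ m : ℕ, m + 1 ≤ N ∧ (m : ℝ) ≤ t ∧ t ≤ m + 1 := by
  rcases htN.lt_or_eq with htN | rfl
  · exact ⟨⌊t⌋₊, (Nat.floor_lt ht).mpr htN, Nat.floor_le ht, (Nat.lt_floor_add_one t).le⟩
  · exact ⟨N - 1, by omega, by simp [Nat.cast_sub hN], by simp [Nat.cast_sub hN]⟩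

lemma dense_setOf_of_forall_add_div_pow {b : ℕ} (hb : 1 < b) {P : ℝ → Prop} {y : ℝ}
    (hy₀ : 0 ≤ y) (hy₁ : y ≤ 1) (hP : ∀ m n : ℕ, P ((m + y) / b ^ n)) :
    Dense {x : Set.Icc (0 : ℝ) 1 | P x} := by
  rw [Metric.dense_iff]
  rintro ⟨x, hx₀, hx₁⟩ r hr
  have hb' : (1 : ℝ) < b := by exact_mod_cast hb
  obtain ⟨n, hn⟩ := exists_pow_lt_of_lt_one hr (inv_lt_one_of_one_lt₀ hb')
  have hbn : (0 : ℝ) < b ^ n := by positivity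
  obtain ⟨m, hmN, hmt, htm⟩ := exists_nat_le_le_add_one (t := x * b ^ n) (N := b ^ n)
    (by positivity) (by push_cast; nlinarith) (by positivity)
  have hmN' : (m : ℝ) + 1 ≤ b ^ n := by exact_mod_cast hmN
  refine ⟨⟨(m + y) / b ^ n, by positivity, (div_le_one hbn).mpr (by linarith)⟩, ?_, hP m n⟩
  rw [Metric.mem_ball, Subtype.dist_eq, Real.dist_eq]
  calc |(m + y) / b ^ n - x| = |m + y - x * b ^ n| / b ^ n := by
        rw [← abs_of_pos hbn, ← abs_div, abs_of_pos hbn]; field_simp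
    _ ≤ 1 / b ^ n := by gcongr; rw [abs_le]; constructor <;> linarith
    _ < r := by rwa [one_div, ← inv_pow]

lemma Dense.not_isOpen_of_dense_compl {X : Type*} [TopologicalSpace X] [Nonempty X] {s : Set X}
    (hs : Dense s) (hsc : Dense sᶜ) : ¬ IsOpen s := fun h => by
  obtain ⟨x, hx, hxc⟩ := hsc.inter_open_nonempty s h hs.nonempty
  exact hxc hx

theorem stmt_7 :
    Dense {x : Set.Icc (0 : ℝ) 1 | kappa2 ↑x = 0} ∧
    Dense {x : Set.Icc (0 : ℝ) 1 | kappa2 ↑x ≠ 0} ∧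
    ¬ IsOpen {x : Set.Icc (0 : ℝ) 1 | kappa2 ↑x = 0} ∧
    ¬ IsClosed {x : Set.Icc (0 : ℝ) 1 | kappa2 ↑x = 0} := by
  have hC : Dense {x : Set.Icc (0 : ℝ) 1 | kappa2 ↑x = 0} :=
    dense_setOf_of_forall_add_div_pow (P := fun x => kappa2 x = 0) one_lt_two zero_le_one le_rfl
      (kappaBase_nat_add_one_div_pow one_lt_two)
  have hD : Dense {x : Set.Icc (0 : ℝ) 1 | kappa2 ↑x ≠ 0} :=
    dense_setOf_of_forall_add_div_pow (P := fun x => kappa2 x ≠ 0) one_lt_two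
      (Real.ofDigits_nonneg tm) (Real.ofDigits_le_one tm)
      (kappaBase_nat_add_ofDigits_div_pow_ne_zero tm exists_tm_add_ne_zero not_isOverlapAt_tm)
  refine ⟨hC, hD, hC.not_isOpen_of_dense_compl hD, fun h => ?_⟩
  exact hD.not_isOpen_of_dense_compl (by simpa [Set.compl_ofPred] using hC) h.isOpen_compl
end
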